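/- For every Hurst parameter H ∈ (0,1/2), the fOU correlation function 𝒞_Z is absolutely integrable on (0,∞): ∫₀^∞ |𝒞_Z(s)| ds < ∞. -/

import Mathlib

/-!
Since `∫ e^{-|v|} dv = 2`, on `(0, ∞)` we have `𝒞_Z = Γ(2H+1)⁻¹ D_{2H} / 2` with
`D_p(s) = ∫ e^{-|v|} (|s+v|^p - s^p) dv`. Near `0`, `D_p` is bounded because
`| |s+v|^p - s^p | ≤ |v|^p` for `0 ≤ p ≤ 1`. For large `s` we use that `v e^{-|v|}` is odd, so the
tangent term `p s^{p-1} v` may be subtracted under the integral; the remainder is at most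
`6 s^{p-2} v²` for every `v` (Taylor when `|v| ≤ s/2`, crude bounds otherwise), and `s^{p-2}` is
integrable at infinity exactly when `p < 1`.
-/

open MeasureTheory Real Set

/-- The fOU correlation function
`𝒞_Z(s) = Γ(2H+1)⁻¹ ( (1/2) ∫_ℝ e^{-|v|} |s+v|^{2H} dv − s^{2H} )`. -/
noncomputable def corrZ (H : ℝ) (s : ℝ) : ℝ :=
  (Real.Gamma (2 * H + 1))⁻¹ *
    ((1/2) * (∫ v : ℝ, Real.exp (-|v|) * |s + v| ^ (2 * H)) - s ^ (2 * H))

lemma abs_rpow_sub_rpow_le {p x y : ℝ} (hp0 : 0 ≤ p) (hp1 : p ≤ 1) (hx : 0 ≤ x)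
    (hy : 0 ≤ y) : |x ^ p - y ^ p| ≤ |x - y| ^ p := by
  wlog hyx : y ≤ x generalizing x y
  · rw [abs_sub_comm, abs_sub_comm x]
    exact this hy hx (le_of_not_ge hyx)
  have hsub := rpow_add_le_add_rpow hy (sub_nonneg.2 hyx) hp0 hp1
  rw [add_sub_cancel] at hsub
  rw [abs_of_nonneg (sub_nonneg.2 (rpow_le_rpow hy hyx hp0)), abs_of_nonneg (sub_nonneg.2 hyx)]
  linarith

lemma abs_rpow_sub_rpow_le_mul_abs_sub {q c t u : ℝ} (hq : q ≤ 1) (hc : 0 < c) (ht : c ≤ t)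
    (hu : c ≤ u) : |t ^ q - u ^ q| ≤ |q| * c ^ (q - 1) * |t - u| := by
  have h := (convex_Ici c).norm_image_sub_le_of_norm_hasDerivWithin_le
    (f := fun x : ℝ => x ^ q) (C := |q| * c ^ (q - 1))
    (fun x hx => (hasDerivAt_rpow_const (Or.inl (hc.trans_le hx).ne')).hasDerivWithinAt)
    (fun x hx => by
      rw [norm_mul, norm_eq_abs, norm_of_nonneg (rpow_nonneg (hc.trans_le hx).le _)]
      exact mul_le_mul_of_nonneg_left (rpow_le_rpow_of_nonpos hc hx (by linarith)) (abs_nonneg q))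
    hu ht
  simpa only [norm_eq_abs] using h

lemma abs_rpow_sub_tangent_le {p c s x : ℝ} (hp : p ≤ 2) (hc : 0 < c) (hs : c ≤ s)
    (hx : c ≤ x) :
    |x ^ p - s ^ p - p * s ^ (p - 1) * (x - s)| ≤ |p * (p - 1)| * c ^ (p - 2) * (x - s) ^ 2 := by
  have hc_le : ∀ t ∈ uIcc s x, c ≤ t := fun t ht => (le_inf hs hx).trans ht.1
  have h := (convex_uIcc s x).norm_image_sub_le_of_norm_hasDerivWithin_le
    (f := fun t : ℝ => t ^ p - p * s ^ (p - 1) * t)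
    (f' := fun t : ℝ => p * t ^ (p - 1) - p * s ^ (p - 1))
    (C := |p * (p - 1)| * c ^ (p - 2) * |x - s|)
    (fun t ht => by
      have hderiv := (hasDerivAt_rpow_const (p := p) (Or.inl (hc.trans_le (hc_le t ht)).ne')).sub
        ((hasDerivAt_id t).const_mul (p * s ^ (p - 1)))
      exact hderiv.hasDerivWithinAt.congr_deriv (by ring))
    (fun t ht => by
      have hlip := abs_rpow_sub_rpow_le_mul_abs_sub (q := p - 1) (by linarith) hc (hc_le t ht) hs
      rw [show p - 1 - 1 = p - 2 by ring] at hlip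
      calc ‖p * t ^ (p - 1) - p * s ^ (p - 1)‖ = |p| * |t ^ (p - 1) - s ^ (p - 1)| := by
            rw [← mul_sub, norm_mul, norm_eq_abs, norm_eq_abs]
        _ ≤ |p| * (|p - 1| * c ^ (p - 2) * |t - s|) := by gcongr
        _ ≤ |p| * (|p - 1| * c ^ (p - 2) * |x - s|) := by
            gcongr |p| * (_ * ?_)
            exact abs_sub_left_of_mem_uIcc ht
        _ = |p * (p - 1)| * c ^ (p - 2) * |x - s| := by rw [abs_mul]; ring)
    left_mem_uIcc right_mem_uIcc
  calc |x ^ p - s ^ p - p * s ^ (p - 1) * (x - s)|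
      = ‖(x ^ p - p * s ^ (p - 1) * x) - (s ^ p - p * s ^ (p - 1) * s)‖ := by
        rw [norm_eq_abs]; ring_nf
    _ ≤ |p * (p - 1)| * c ^ (p - 2) * |x - s| * |x - s| := by simpa only [norm_eq_abs] using h
    _ = |p * (p - 1)| * c ^ (p - 2) * (x - s) ^ 2 := by
        rw [mul_assoc _ |x - s|, abs_mul_abs_self, sq]

lemma abs_abs_add_rpow_sub_rpow_le {p s : ℝ} (hp0 : 0 ≤ p) (hp1 : p ≤ 1) (hs : 0 ≤ s)
    (v : ℝ) : |(|s + v| ^ p - s ^ p)| ≤ |v| ^ p := by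
  refine (abs_rpow_sub_rpow_le hp0 hp1 (abs_nonneg _) hs).trans (rpow_le_rpow (abs_nonneg _) ?_ hp0)
  simpa [abs_of_nonneg hs] using abs_abs_sub_abs_le_abs_sub (s + v) s

lemma abs_abs_add_rpow_sub_tangent_le {p s : ℝ} (hp0 : 0 ≤ p) (hp1 : p ≤ 1) (hs : 0 < s)
    (v : ℝ) : |(|s + v| ^ p - s ^ p - p * s ^ (p - 1) * v)| ≤ 6 * s ^ (p - 2) * v ^ 2 := by
  have hpow_pos : 0 < s ^ (p - 2) := rpow_pos_of_pos hs _
  have hhalf : (s / 2) ^ (p - 2) ≤ 4 * s ^ (p - 2) := by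
    have h2 : (1 / 4 : ℝ) ≤ 2 ^ (p - 2) :=
      calc (1 / 4 : ℝ) = 2 ^ (-2 : ℝ) := by norm_num
        _ ≤ 2 ^ (p - 2) := rpow_le_rpow_of_exponent_le one_le_two (by linarith)
    rw [div_rpow hs.le zero_le_two, div_le_iff₀ (by positivity)]
    nlinarith
  rcases le_or_gt |v| (s / 2) with hv | hv
  · have hsv : s / 2 ≤ s + v := by linarith [neg_abs_le v]
    have hpp : |p * (p - 1)| ≤ 1 := by rw [abs_le]; constructor <;> nlinarith
    have h := abs_rpow_sub_tangent_le (p := p) (s := s) (by linarith) (half_pos hs)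
      (by linarith) hsv
    rw [add_sub_cancel_left] at h
    rw [abs_of_pos (show 0 < s + v by linarith)]
    calc _ ≤ |p * (p - 1)| * (s / 2) ^ (p - 2) * v ^ 2 := h
      _ ≤ 1 * (4 * s ^ (p - 2)) * v ^ 2 := by gcongr
      _ ≤ 6 * s ^ (p - 2) * v ^ 2 := by nlinarith [sq_nonneg v]
  · have hv0 : 0 < |v| := by linarith
    have hfar : |(|s + v| ^ p - s ^ p)| ≤ 4 * s ^ (p - 2) * v ^ 2 :=
      calc _ ≤ |v| ^ p := abs_abs_add_rpow_sub_rpow_le hp0 hp1 hs.le v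
        _ = |v| ^ (p - 2) * v ^ 2 := by
          rw [← sq_abs v, ← rpow_two, ← rpow_add hv0, sub_add_cancel]
        _ ≤ (s / 2) ^ (p - 2) * v ^ 2 :=
          mul_le_mul_of_nonneg_right
            (rpow_le_rpow_of_nonpos (half_pos hs) hv.le (by linarith)) (sq_nonneg v)
        _ ≤ 4 * s ^ (p - 2) * v ^ 2 := by gcongr
    have htangent : |p * s ^ (p - 1) * v| ≤ 2 * s ^ (p - 2) * v ^ 2 :=
      calc |p * s ^ (p - 1) * v| = p * s ^ (p - 2) * (s * |v|) := by
            rw [abs_mul, abs_mul, abs_of_nonneg hp0, abs_of_pos (rpow_pos_of_pos hs _),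
              show p - 1 = p - 2 + 1 by ring, rpow_add_one hs.ne']
            ring
        _ ≤ 1 * s ^ (p - 2) * (2 * |v| * |v|) := by gcongr; linarith
        _ = 2 * s ^ (p - 2) * v ^ 2 := by rw [mul_assoc 2, abs_mul_abs_self]; ring
    calc _ ≤ |(|s + v| ^ p - s ^ p)| + |p * s ^ (p - 1) * v| := abs_sub _ _
      _ ≤ 6 * s ^ (p - 2) * v ^ 2 := by linarith

lemma integrable_comp_abs_of_integrableOn_Ioi {E : Type*} [NormedAddCommGroup E] {f : ℝ → E}
    (hf : IntegrableOn f (Ioi 0)) : Integrable fun x => f |x| := by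
  have hpos : IntegrableOn (fun x => f |x|) (Ioi 0) :=
    hf.congr_fun (fun x hx => by rw [abs_of_pos hx]) measurableSet_Ioi
  have hneg : IntegrableOn (fun x => f |x|) (Iic 0) := by
    let neg_embedding : MeasurableEmbedding fun x : ℝ => -x :=
      (Homeomorph.neg ℝ).measurableEmbedding
    rw [← Measure.map_neg_eq_self (volume : Measure ℝ), neg_embedding.integrableOn_map_iff]
    simp_rw [Function.comp_def, abs_neg, neg_preimage, neg_Iic, neg_zero]
    exact Iff.mpr integrableOn_Ici_iff_integrableOn_Ioi hpos
  rw [← integrableOn_univ, ← Iic_union_Ioi (a := (0 : ℝ))]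
  exact hneg.union hpos

lemma integrable_exp_neg_abs_mul_abs_rpow {q : ℝ} (hq : -1 < q) :
    Integrable fun v : ℝ => exp (-|v|) * |v| ^ q :=
  integrable_comp_abs_of_integrableOn_Ioi (f := fun x => exp (-x) * x ^ q) <|
    (integrableOn_rpow_mul_exp_neg_rpow hq one_pos).congr_fun
      (fun x _ => by simp only [rpow_one, mul_comm]) measurableSet_Ioi

lemma integrable_exp_neg_abs : Integrable fun v : ℝ => exp (-|v|) := by
  simpa using integrable_exp_neg_abs_mul_abs_rpow (q := 0) (by norm_num)

lemma integrable_exp_neg_abs_mul_sq : Integrable fun v : ℝ => exp (-|v|) * v ^ 2 := by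
  simpa [rpow_two, sq_abs] using integrable_exp_neg_abs_mul_abs_rpow (q := 2) (by norm_num)

lemma integral_exp_neg_abs : ∫ v : ℝ, exp (-|v|) = 2 :=
  calc ∫ v : ℝ, exp (-|v|) = 2 * ∫ x in Ioi 0, exp (-x) :=
      integral_comp_abs (f := fun x => exp (-x))
    _ = 2 := by rw [integral_exp_neg_Ioi_zero, mul_one]

lemma integrable_exp_neg_abs_mul_self : Integrable fun v : ℝ => exp (-|v|) * v :=
  (integrable_exp_neg_abs_mul_abs_rpow (q := 1) (by norm_num)).mono'
    (by fun_prop) (ae_of_all _ fun v => by simp)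

lemma integral_exp_neg_abs_mul_self : ∫ v : ℝ, exp (-|v|) * v = 0 := by
  have h := integral_neg_eq_self (fun v : ℝ => exp (-|v|) * v) volume
  simp only [abs_neg, mul_neg, integral_neg] at h
  linarith

noncomputable def expKernelDefect (p s : ℝ) : ℝ :=
  ∫ v : ℝ, exp (-|v|) * (|s + v| ^ p - s ^ p)

section ExpKernelDefect

variable {p s : ℝ}

lemma continuous_exp_neg_abs_mul_abs_add_rpow_sub (hp0 : 0 ≤ p) :
    Continuous fun x : ℝ × ℝ => exp (-|x.2|) * (|x.1 + x.2| ^ p - x.1 ^ p) := by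
  have := continuous_rpow_const hp0
  fun_prop

lemma norm_exp_neg_abs_mul_abs_add_rpow_sub_le (hp0 : 0 ≤ p) (hp1 : p ≤ 1) (hs : 0 ≤ s)
    (v : ℝ) : ‖exp (-|v|) * (|s + v| ^ p - s ^ p)‖ ≤ exp (-|v|) * |v| ^ p := by
  rw [norm_mul, norm_of_nonneg (exp_pos _).le, norm_eq_abs]
  exact mul_le_mul_of_nonneg_left (abs_abs_add_rpow_sub_rpow_le hp0 hp1 hs v) (exp_pos _).le

lemma integrable_exp_neg_abs_mul_abs_add_rpow_sub (hp0 : 0 ≤ p) (hp1 : p ≤ 1) (hs : 0 ≤ s) :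
    Integrable fun v : ℝ => exp (-|v|) * (|s + v| ^ p - s ^ p) :=
  (integrable_exp_neg_abs_mul_abs_rpow (q := p) (by linarith)).mono'
    ((continuous_exp_neg_abs_mul_abs_add_rpow_sub hp0).comp
      (Continuous.prodMk_right s)).aestronglyMeasurable
    (ae_of_all _ (norm_exp_neg_abs_mul_abs_add_rpow_sub_le hp0 hp1 hs))

lemma abs_expKernelDefect_le (hp0 : 0 ≤ p) (hp1 : p ≤ 1) (hs : 0 ≤ s) :
    |expKernelDefect p s| ≤ ∫ v : ℝ, exp (-|v|) * |v| ^ p := by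
  rw [← norm_eq_abs, expKernelDefect]
  exact norm_integral_le_of_norm_le (integrable_exp_neg_abs_mul_abs_rpow (by linarith))
    (ae_of_all _ (norm_exp_neg_abs_mul_abs_add_rpow_sub_le hp0 hp1 hs))

lemma expKernelDefect_eq_integral_sub_tangent (hp0 : 0 ≤ p) (hp1 : p ≤ 1) (hs : 0 ≤ s) :
    expKernelDefect p s =
      ∫ v : ℝ, exp (-|v|) * (|s + v| ^ p - s ^ p - p * s ^ (p - 1) * v) := by
  have hsplit := integral_sub (integrable_exp_neg_abs_mul_abs_add_rpow_sub hp0 hp1 hs)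
    (integrable_exp_neg_abs_mul_self.const_mul (p * s ^ (p - 1)))
  rw [integral_const_mul, integral_exp_neg_abs_mul_self, mul_zero, sub_zero] at hsplit
  rw [expKernelDefect, ← hsplit]
  congr 1 with v
  ring

lemma abs_expKernelDefect_le_rpow (hp0 : 0 ≤ p) (hp1 : p ≤ 1) (hs : 0 < s) :
    |expKernelDefect p s| ≤ 6 * s ^ (p - 2) * ∫ v : ℝ, exp (-|v|) * v ^ 2 := by
  rw [expKernelDefect_eq_integral_sub_tangent hp0 hp1 hs.le, ← integral_const_mul,
    ← norm_eq_abs]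
  refine norm_integral_le_of_norm_le (integrable_exp_neg_abs_mul_sq.const_mul _)
    (ae_of_all _ fun v => ?_)
  rw [norm_mul, norm_of_nonneg (exp_pos _).le, norm_eq_abs]
  calc exp (-|v|) * |(|s + v| ^ p - s ^ p - p * s ^ (p - 1) * v)|
      ≤ exp (-|v|) * (6 * s ^ (p - 2) * v ^ 2) :=
        mul_le_mul_of_nonneg_left (abs_abs_add_rpow_sub_tangent_le hp0 hp1 hs v) (exp_pos _).le
    _ = 6 * s ^ (p - 2) * (exp (-|v|) * v ^ 2) := by ring

lemma integrableOn_Ioi_expKernelDefect (hp0 : 0 ≤ p) (hp1 : p < 1) :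
    IntegrableOn (expKernelDefect p) (Ioi 0) := by
  have hmeas : AEStronglyMeasurable (expKernelDefect p) :=
    (continuous_exp_neg_abs_mul_abs_add_rpow_sub hp0).stronglyMeasurable
      |>.integral_prod_right' |>.aestronglyMeasurable
  rw [← Ioc_union_Ioi_eq_Ioi zero_le_one]
  refine IntegrableOn.union ?_ ?_
  · refine Integrable.mono'
      (integrableOn_const (C := ∫ v : ℝ, exp (-|v|) * |v| ^ p) measure_Ioc_lt_top.ne)
      hmeas.restrict
      ((ae_restrict_iff' measurableSet_Ioc).2 (ae_of_all _ fun s hs => ?_))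
    exact abs_expKernelDefect_le hp0 hp1.le hs.1.le
  · refine Integrable.mono'
      ((integrableOn_Ioi_rpow_of_lt (a := p - 2) (by linarith) one_pos).const_mul
        (6 * ∫ v : ℝ, exp (-|v|) * v ^ 2)) hmeas.restrict
      ((ae_restrict_iff' measurableSet_Ioi).2 (ae_of_all _ fun s hs => ?_))
    rw [norm_eq_abs]
    exact (abs_expKernelDefect_le_rpow hp0 hp1.le (zero_lt_one.trans hs)).trans_eq (by ring)

end ExpKernelDefect

lemma corrZ_eq_expKernelDefect {H s : ℝ} (hH0 : 0 ≤ H) (hH1 : H ≤ 1 / 2) (hs : 0 ≤ s) :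
    corrZ H s = (Gamma (2 * H + 1))⁻¹ * (expKernelDefect (2 * H) s / 2) := by
  have hsplit := integral_add (integrable_exp_neg_abs_mul_abs_add_rpow_sub (p := 2 * H)
    (by linarith) (by linarith) hs) (integrable_exp_neg_abs.mul_const (s ^ (2 * H)))
  rw [integral_mul_const, integral_exp_neg_abs] at hsplit
  have hintegral : ∫ v : ℝ, exp (-|v|) * |s + v| ^ (2 * H)
      = expKernelDefect (2 * H) s + 2 * s ^ (2 * H) := by
    rw [expKernelDefect, ← hsplit]
    congr 1 with v
    ring
  rw [corrZ, hintegral]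
  ring

/-- For every `H ∈ (0,1/2)`, the fOU correlation function is absolutely
integrable on `(0,∞)`: `∫₀^∞ |𝒞_Z(s)| ds < ∞`. -/
theorem corrZ_integrable (H : ℝ) (hH : H ∈ Set.Ioo (0 : ℝ) (1/2)) :
    IntegrableOn (corrZ H) (Set.Ioi 0) := by
  obtain ⟨hH0, hH1⟩ := hH
  have hdefect := integrableOn_Ioi_expKernelDefect (p := 2 * H) (by linarith) (by linarith)
  exact IntegrableOn.congr_fun ((hdefect.div_const 2).const_mul (Gamma (2 * H + 1))⁻¹)
    (fun s hs => (corrZ_eq_expKernelDefect hH0.le hH1.le (mem_Ioi.1 hs).le).symm)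
    measurableSet_Ioi
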